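/- In the setting of the random-secret scheme: let A be any event on triples (R,H,L), let D be the distribution where R, H are uniform independent and L solves [L M I]·P = H (set to 0 if no unique solution), and let D' be the distribution where R, L are uniform independent and H = [L M I]·P. Then Pr_D[A] ≥ Pr_{D'}[A] − C²/q, and symmetrically Pr_{D'}[A] ≥ Pr_D[A] − C²/q. -/
import Mathlib


/-- Position (from 1 to n = C + m + b) of a column index of the block matrix `[L M I]`. -/
def colIdx (C m b : ℕ) : Fin C ⊕ (Fin m ⊕ Fin b) → ℕ :=
  Sum.elim (fun k => (k : ℕ) + 1)
    (Sum.elim (fun k => C + (k : ℕ) + 1) (fun k => C + m + (k : ℕ) + 1))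

/-- The `n × C` parity-check matrix `P` with `(i,j)` entry `(r j)^i`,
rows indexed by the columns of `[L M I]` (so `n = C + m + b`). -/
def Pmat (F : Type) [Field F] (C m b : ℕ) (r : Fin C → F) :
    Matrix (Fin C ⊕ (Fin m ⊕ Fin b)) (Fin C) F :=
  Matrix.of fun s j => r j ^ colIdx C m b s

/-- The `b × n` block matrix `X = [L M I]` (with `n = C + m + b`). -/
def Xmat (F : Type) [Field F] (b m C : ℕ)
    (M : Matrix (Fin b) (Fin m) F) (L : Matrix (Fin b) (Fin C) F) :
    Matrix (Fin b) (Fin C ⊕ (Fin m ⊕ Fin b)) F :=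
  Matrix.of fun i s =>
    Sum.elim (fun k => L i k)
      (Sum.elim (fun k => M i k) (fun k => if i = k then (1 : F) else 0)) s

open Classical Matrix

/-- The unique `L` solving `[L M I] ⬝ P = H` if it exists (and is unique); `0` otherwise. -/
noncomputable def Lof (F : Type) [Field F] [Fintype F] (b m C : ℕ)
    (M : Matrix (Fin b) (Fin m) F) (r : Fin C → F) (H : Matrix (Fin b) (Fin C) F) :
    Matrix (Fin b) (Fin C) F :=
  if h : ∃! L : Matrix (Fin b) (Fin C) F, Xmat F b m C M L * Pmat F C m b r = H then
    h.choose
  else 0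

variable {F : Type} [Field F]

def good {C : ℕ} (r : Fin C → F) : Prop := Function.Injective r ∧ ∀ j, r j ≠ 0

def Qmat (F : Type) [Field F] (C : ℕ) (r : Fin C → F) : Matrix (Fin C) (Fin C) F :=
  Matrix.of fun k j => r j ^ ((k : ℕ) + 1)

lemma Xmat_mul_Pmat (b m C : ℕ) (M : Matrix (Fin b) (Fin m) F)
    (L : Matrix (Fin b) (Fin C) F) (r : Fin C → F) :
    Xmat F b m C M L * Pmat F C m b r
      = L * Qmat F C r + Xmat F b m C M 0 * Pmat F C m b r := by
  ext i j
  simp [Matrix.mul_apply, Matrix.add_apply, Xmat, Pmat, Qmat, Fintype.sum_sum_type, colIdx]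

lemma Qmat_det_isUnit {C : ℕ} {r : Fin C → F} (h : good r) : IsUnit (Qmat F C r).det := by
  have hQ : Qmat F C r = (Matrix.diagonal r * Matrix.vandermonde r)ᵀ := by
    ext k j
    simp [Qmat, Matrix.mul_apply, Matrix.transpose_apply, Matrix.vandermonde,
      Matrix.diagonal_apply, pow_succ, mul_comm]
  rw [hQ, Matrix.det_transpose, Matrix.det_mul, Matrix.det_diagonal]
  exact (IsUnit.mk0 _ (Finset.prod_ne_zero_iff.mpr fun j _ => h.2 j)).mul
    (IsUnit.mk0 _ (Matrix.det_vandermonde_ne_zero_iff.mpr h.1))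

lemma existsUnique_L {b m C : ℕ} (M : Matrix (Fin b) (Fin m) F) {r : Fin C → F}
    (h : good r) (H : Matrix (Fin b) (Fin C) F) :
    ∃! L : Matrix (Fin b) (Fin C) F, Xmat F b m C M L * Pmat F C m b r = H := by
  have hu := Qmat_det_isUnit h
  refine ⟨(H - Xmat F b m C M 0 * Pmat F C m b r) * (Qmat F C r)⁻¹, ?_, ?_⟩
  · show Xmat F b m C M _ * Pmat F C m b r = H
    rw [Xmat_mul_Pmat]
    rw [Matrix.nonsing_inv_mul_cancel_right _ _ hu, sub_add_cancel]
  · intro L hL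
    rw [Xmat_mul_Pmat] at hL
    have h2 : L * Qmat F C r = H - Xmat F b m C M 0 * Pmat F C m b r := by
      rw [← hL]; abel
    rw [← h2, Matrix.mul_nonsing_inv_cancel_right _ _ hu]

lemma XP_Lof {b m C : ℕ} [Fintype F] (M : Matrix (Fin b) (Fin m) F) {r : Fin C → F}
    (h : good r) (H : Matrix (Fin b) (Fin C) F) :
    Xmat F b m C M (Lof F b m C M r H) * Pmat F C m b r = H := by
  have he := existsUnique_L M h H
  rw [Lof, dif_pos he]
  exact he.choose_spec.1

lemma Lof_XP {b m C : ℕ} [Fintype F] (M : Matrix (Fin b) (Fin m) F) {r : Fin C → F}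
    (h : good r) (L : Matrix (Fin b) (Fin C) F) :
    Lof F b m C M r (Xmat F b m C M L * Pmat F C m b r) = L := by
  have he := existsUnique_L M h (Xmat F b m C M L * Pmat F C m b r)
  rw [Lof, dif_pos he]
  exact (he.choose_spec.2 L rfl).symm

lemma card_filter_prod {α β : Type*} [Fintype α] [Fintype β] (P : α × β → Prop)
    [DecidablePred P] :
    (Finset.univ.filter P).card = ∑ a : α, (Finset.univ.filter fun b => P (a, b)).card := by
  rw [Finset.card_filter, Fintype.sum_prod_type]
  exact Finset.sum_congr rfl fun a _ => (Finset.card_filter _ _).symm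

lemma fiber_eq {b m C : ℕ} [Fintype F] (M : Matrix (Fin b) (Fin m) F)
    (A : (Fin C → F) × Matrix (Fin b) (Fin C) F × Matrix (Fin b) (Fin C) F → Prop)
    {r : Fin C → F} (h : good r) :
    (Finset.univ.filter fun H : Matrix (Fin b) (Fin C) F =>
        A (r, H, Lof F b m C M r H)).card
      = (Finset.univ.filter fun L : Matrix (Fin b) (Fin C) F =>
        A (r, Xmat F b m C M L * Pmat F C m b r, L)).card := by
  apply Finset.card_bij' (fun H _ => Lof F b m C M r H)
    (fun L _ => Xmat F b m C M L * Pmat F C m b r)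
  · intro H hH
    simp only [Finset.mem_filter, Finset.mem_univ, true_and] at hH ⊢
    rwa [XP_Lof M h]
  · intro L hL
    simp only [Finset.mem_filter, Finset.mem_univ, true_and] at hL ⊢
    rwa [Lof_XP M h]
  · intro H _; exact XP_Lof M h H
  · intro L _; exact Lof_XP M h L

lemma card_pin_le [Fintype F] {C : ℕ} (i : Fin C) (c : (Fin C → F) → F)
    (hc : ∀ r v, c (Function.update r i v) = c r) :
    (Finset.univ.filter fun r : Fin C → F => r i = c r).card * Fintype.card F
      ≤ Fintype.card F ^ C := by
  have hle := Finset.card_le_card_of_injOn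
    (f := fun p : (Fin C → F) × F => Function.update p.1 i p.2)
    (s := (Finset.univ.filter fun r : Fin C → F => r i = c r) ×ˢ Finset.univ)
    (t := Finset.univ) (fun _ _ => Finset.mem_univ _) ?_
  · simpa [Fintype.card_fun] using hle
  · intro p hp q hq heq
    replace heq : Function.update p.1 i p.2 = Function.update q.1 i q.2 := heq
    simp only [Finset.coe_filter, Finset.mem_coe, Finset.mem_product, Finset.mem_filter,
      Finset.mem_univ, true_and, Set.mem_setOf_eq, Finset.mem_coe] at hp hq
    have hcc : c p.1 = c q.1 := by
      rw [← hc p.1 p.2, heq, hc]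
    have h1 : p.1 = q.1 := by
      funext j
      by_cases hj : j = i
      · subst hj
        rw [hp.1, hq.1, hcc]
      · have := congrFun heq j
        simpa [Function.update_of_ne hj] using this
    have h2 : p.2 = q.2 := by
      have := congrFun heq i
      simpa using this
    exact Prod.ext h1 h2

lemma card_bad_le [Fintype F] (C : ℕ) :
    (Finset.univ.filter fun r : Fin C → F => ¬ good r).card * Fintype.card F
      ≤ C ^ 2 * Fintype.card F ^ C := by
  set B : Fin C × Fin C → Finset (Fin C → F) := fun p =>
    Finset.univ.filter fun r => r p.1 = (if p.1 = p.2 then 0 else r p.2) with hB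
  have hsub : (Finset.univ.filter fun r : Fin C → F => ¬ good r)
      ⊆ Finset.univ.biUnion B := by
    intro r hr
    simp only [Finset.mem_filter, Finset.mem_univ, true_and, good, not_and_or,
      not_forall] at hr
    rcases hr with h | h
    · rw [Function.not_injective_iff] at h
      obtain ⟨a, b2, hab, hne⟩ := h
      refine Finset.mem_biUnion.mpr ⟨(a, b2), Finset.mem_univ _, ?_⟩
      simp [hB, if_neg hne, hab]
    · obtain ⟨j, hj⟩ := h
      refine Finset.mem_biUnion.mpr ⟨(j, j), Finset.mem_univ _, ?_⟩
      simp only [hB, Finset.mem_filter, Finset.mem_univ, true_and, if_pos rfl]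
      exact not_not.mp hj
  calc (Finset.univ.filter fun r : Fin C → F => ¬ good r).card * Fintype.card F
      ≤ (Finset.univ.biUnion B).card * Fintype.card F :=
        Nat.mul_le_mul_right _ (Finset.card_le_card hsub)
    _ ≤ (∑ p : Fin C × Fin C, (B p).card) * Fintype.card F :=
        Nat.mul_le_mul_right _ (Finset.card_biUnion_le)
    _ = ∑ p : Fin C × Fin C, (B p).card * Fintype.card F := by
        rw [Finset.sum_mul]
    _ ≤ ∑ _p : Fin C × Fin C, Fintype.card F ^ C := by
        apply Finset.sum_le_sum
        intro p _
        by_cases hpp : p.1 = p.2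
        · have := card_pin_le (F := F) p.1 (fun _ => 0) (fun _ _ => rfl)
          simpa [hB, if_pos hpp] using this
        · have := card_pin_le (F := F) p.1 (fun r => r p.2)
            (fun r v => Function.update_of_ne (fun h => hpp h.symm) _ _)
          simpa [hB, if_neg hpp] using this
    _ = C ^ 2 * Fintype.card F ^ C := by
        simp [Finset.card_univ, sq]



/-- Let `D` be the distribution of triples `(R, H, L)` where `R, H` are
uniform independent and `L` is the unique solution of `[L M I] ⬝ P = H` (or `0`),
and `D'` the distribution where `R, L` are uniform independent and `H = [L M I] ⬝ P`.
Then for any event `A`, `Pr_D[A] ≥ Pr_{D'}[A] - C²/q` and `Pr_{D'}[A] ≥ Pr_D[A] - C²/q`. -/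

theorem prob_D_D'_close (F : Type) [Field F] [Fintype F] (b m C : ℕ)
    (M : Matrix (Fin b) (Fin m) F)
    (A : (Fin C → F) × Matrix (Fin b) (Fin C) F × Matrix (Fin b) (Fin C) F → Prop) :
    (((Finset.univ.filter (fun p : (Fin C → F) × Matrix (Fin b) (Fin C) F =>
          A (p.1, p.2, Lof F b m C M p.1 p.2))).card : ℚ)
        / (Fintype.card ((Fin C → F) × Matrix (Fin b) (Fin C) F))
      ≥ ((Finset.univ.filter (fun p : (Fin C → F) × Matrix (Fin b) (Fin C) F =>
          A (p.1, Xmat F b m C M p.2 * Pmat F C m b p.1, p.2))).card : ℚ)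
        / (Fintype.card ((Fin C → F) × Matrix (Fin b) (Fin C) F))
        - (C : ℚ) ^ 2 / (Fintype.card F))
    ∧ (((Finset.univ.filter (fun p : (Fin C → F) × Matrix (Fin b) (Fin C) F =>
          A (p.1, Xmat F b m C M p.2 * Pmat F C m b p.1, p.2))).card : ℚ)
        / (Fintype.card ((Fin C → F) × Matrix (Fin b) (Fin C) F))
      ≥ ((Finset.univ.filter (fun p : (Fin C → F) × Matrix (Fin b) (Fin C) F =>
          A (p.1, p.2, Lof F b m C M p.1 p.2))).card : ℚ)
        / (Fintype.card ((Fin C → F) × Matrix (Fin b) (Fin C) F))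
        - (C : ℚ) ^ 2 / (Fintype.card F)) := by
  classical
  have key : ∀ f g : (Fin C → F) × Matrix (Fin b) (Fin C) F → Prop,
      (∀ r : Fin C → F, good r →
        (Finset.univ.filter fun H => f (r, H)).card
          = (Finset.univ.filter fun H => g (r, H)).card) →
      ((Finset.univ.filter f).card : ℚ)
          / (Fintype.card ((Fin C → F) × Matrix (Fin b) (Fin C) F))
        ≥ ((Finset.univ.filter g).card : ℚ)
          / (Fintype.card ((Fin C → F) × Matrix (Fin b) (Fin C) F))
          - (C : ℚ) ^ 2 / (Fintype.card F) := by
    intro f g hfg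
    have hq : 0 < Fintype.card F := Fintype.card_pos
    have hNRpos : 0 < Fintype.card (Fin C → F) := Fintype.card_pos
    have hNHpos : 0 < Fintype.card (Matrix (Fin b) (Fin C) F) := Fintype.card_pos
    have hcardprod : Fintype.card ((Fin C → F) × Matrix (Fin b) (Fin C) F)
        = Fintype.card (Fin C → F) * Fintype.card (Matrix (Fin b) (Fin C) F) :=
      Fintype.card_prod _ _
    -- main counting inequality in ℕ
    have hmain : (Finset.univ.filter g).card ≤ (Finset.univ.filter f).card
        + (Finset.univ.filter fun r : Fin C → F => ¬ good r).card
          * Fintype.card (Matrix (Fin b) (Fin C) F) := by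
      rw [card_filter_prod f, card_filter_prod g]
      calc ∑ r : Fin C → F, (Finset.univ.filter fun H => g (r, H)).card
          = ∑ r ∈ Finset.univ.filter (fun r : Fin C → F => good r),
              (Finset.univ.filter fun H => g (r, H)).card
            + ∑ r ∈ Finset.univ.filter (fun r : Fin C → F => ¬ good r),
              (Finset.univ.filter fun H => g (r, H)).card :=
            (Finset.sum_filter_add_sum_filter_not _ _ _).symm
        _ = ∑ r ∈ Finset.univ.filter (fun r : Fin C → F => good r),
              (Finset.univ.filter fun H => f (r, H)).card
            + ∑ r ∈ Finset.univ.filter (fun r : Fin C → F => ¬ good r),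
              (Finset.univ.filter fun H => g (r, H)).card := by
            congr 1
            exact Finset.sum_congr rfl fun r hr =>
              (hfg r (Finset.mem_filter.mp hr).2).symm
        _ ≤ ∑ r : Fin C → F, (Finset.univ.filter fun H => f (r, H)).card
            + (Finset.univ.filter fun r : Fin C → F => ¬ good r).card
              * Fintype.card (Matrix (Fin b) (Fin C) F) := by
            apply Nat.add_le_add
            · exact Finset.sum_le_sum_of_subset (Finset.filter_subset _ _)
            · calc ∑ r ∈ Finset.univ.filter (fun r : Fin C → F => ¬ good r),
                    (Finset.univ.filter fun H => g (r, H)).card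
                  ≤ ∑ _r ∈ Finset.univ.filter (fun r : Fin C → F => ¬ good r),
                    Fintype.card (Matrix (Fin b) (Fin C) F) :=
                    Finset.sum_le_sum fun r _ => by
                      simpa [Finset.card_univ] using
                        Finset.card_filter_le Finset.univ (fun H => g (r, H))
                _ = _ := by rw [Finset.sum_const, smul_eq_mul]
    have hbad : (Finset.univ.filter fun r : Fin C → F => ¬ good r).card
        * Fintype.card F ≤ C ^ 2 * Fintype.card (Fin C → F) := by
      have h := card_bad_le (F := F) C
      rwa [show Fintype.card F ^ C = Fintype.card (Fin C → F) by
        rw [Fintype.card_fun, Fintype.card_fin]] at h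
    rw [ge_iff_le, sub_le_iff_le_add, hcardprod]
    have h1 : ((Finset.univ.filter g).card : ℚ) ≤ (Finset.univ.filter f).card
        + (Finset.univ.filter fun r : Fin C → F => ¬ good r).card
          * Fintype.card (Matrix (Fin b) (Fin C) F) := by exact_mod_cast hmain
    have h2 : ((Finset.univ.filter fun r : Fin C → F => ¬ good r).card : ℚ)
        * Fintype.card F ≤ (C : ℚ) ^ 2 * Fintype.card (Fin C → F) := by
      exact_mod_cast hbad
    have hNR : (0:ℚ) < Fintype.card (Fin C → F) := by exact_mod_cast hNRpos
    have hNH : (0:ℚ) < Fintype.card (Matrix (Fin b) (Fin C) F) := by exact_mod_cast hNHpos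
    have hqQ : (0:ℚ) < Fintype.card F := by exact_mod_cast hq
    rw [div_add_div _ _ (by positivity) (by positivity), div_le_div_iff₀ (by positivity)
      (by positivity)]
    push_cast
    nlinarith [mul_le_mul_of_nonneg_right h1
        (by positivity : (0:ℚ) ≤ (Fintype.card (Fin C → F) : ℚ)
          * Fintype.card (Matrix (Fin b) (Fin C) F) * Fintype.card F),
      mul_le_mul_of_nonneg_right h2
        (by positivity : (0:ℚ) ≤ (Fintype.card (Matrix (Fin b) (Fin C) F) : ℚ)
          * Fintype.card (Matrix (Fin b) (Fin C) F) * Fintype.card (Fin C → F))]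
  constructor
  · exact key _ _ fun r hr => fiber_eq M A hr
  · exact key _ _ fun r hr => (fiber_eq M A hr).symm
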